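/- arXiv:2604.03680 — 3 statements merged into one kernel-verified Lean document; each statement's English description precedes it below -/
import Mathlib

section
/- Let 0 < p < 1 and let n, N be integers with 0 ≤ n and n+1 ≤ N. Then the monic Krawtchouk polynomials satisfy the polynomial identity in x: (N+1−x)·K_{n+1}(x; p, N) = (N−n)(1−p)·K_{n+1}(x; p, N+1) − K_{n+2}(x; p, N+1). -/
open Polynomial

/-- The monic Krawtchouk polynomial
`K_n(x; p, N) = Σ_{k=0}^{n} C(n,k) (−p)^{n−k} ((N−k)!/(N−n)!) ∏_{j=0}^{k−1}(x−j)`. -/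
noncomputable def krawtchouk (p : ℝ) (n N : ℕ) : Polynomial ℝ :=
  ∑ k ∈ Finset.range (n + 1),
    Polynomial.C ((n.choose k : ℝ) * (-p) ^ (n - k) *
        (((N - k).factorial / (N - n).factorial : ℕ) : ℝ)) *
      ∏ j ∈ Finset.range k, (Polynomial.X - Polynomial.C (j : ℝ))

/-- coefficient of krawtchouk in falling-factorial basis -/
noncomputable def aK (p : ℝ) (n N k : ℕ) : ℝ :=
  (n.choose k : ℝ) * (-p) ^ (n - k) *
    (((N - k).factorial / (N - n).factorial : ℕ) : ℝ)

noncomputable def FF (k : ℕ) : Polynomial ℝ :=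
  ∏ j ∈ Finset.range k, (Polynomial.X - Polynomial.C (j : ℝ))

lemma krawtchouk_eq (p : ℝ) (n N : ℕ) :
    krawtchouk p n N = ∑ k ∈ Finset.range (n + 1), C (aK p n N k) * FF k := rfl

lemma key_mul (c : ℝ) (k : ℕ) :
    (C c - X) * FF k = C (c - k) * FF k - FF (k + 1) := by
  rw [FF, FF, Finset.prod_range_succ, map_sub]
  ring

lemma cast_fac_div (a b : ℕ) (h : b ≤ a) :
    (((a.factorial / b.factorial : ℕ)) : ℝ) = a.factorial / b.factorial :=
  Nat.cast_div (Nat.factorial_dvd_factorial h)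
    (by exact_mod_cast (Nat.factorial_pos b).ne')

lemma coeff_id (p : ℝ) (n N k : ℕ) (hnN : n + 1 ≤ N) (hk : k < n + 3) :
    aK p (n+1) N k * ((N:ℝ) + 1 - k) - (if k = 0 then 0 else aK p (n+1) N (k-1))
      = ((N:ℝ) - n) * (1 - p) * aK p (n+1) (N+1) k - aK p (n+2) (N+1) k := by
  have hsfac : (((N - (n+1)).factorial : ℕ) : ℝ) ≠ 0 := by
    exact_mod_cast (Nat.factorial_pos _).ne'
  by_cases hk2 : k ≤ n + 1
  · have hkN : k ≤ N := le_trans hk2 hnN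
    have hsm : N - (n+1) ≤ N - k := by omega
    have hsℝ : ((N - (n+1) : ℕ) : ℝ) = (N : ℝ) - (n+1) := by
      rw [Nat.cast_sub hnN]; push_cast; ring
    have hNn : (N:ℝ) - n = ((N - (n+1) : ℕ) : ℝ) + 1 := by rw [hsℝ]; ring
    have h1 : ((N - (n+1) : ℕ) : ℝ) + 1 ≠ 0 := by positivity
    have hmℝ : ((N - k : ℕ) : ℝ) = (N : ℝ) - k := Nat.cast_sub hkN
    have e1 : N + 1 - k = (N - k) + 1 := by omega
    have e2 : N + 1 - (n+1) = (N - (n+1)) + 1 := by omega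
    have e3 : N + 1 - (n+2) = N - (n+1) := by omega
    have e4 : n + 2 - k = (n + 1 - k) + 1 := by omega
    unfold aK
    rw [e1, e2, e3, e4]
    rcases k with _ | j
    · rw [if_pos rfl]
      rw [cast_fac_div _ _ hsm, cast_fac_div _ _ (by omega), cast_fac_div _ _ (by omega)]
      rw [Nat.factorial_succ (N - 0), Nat.factorial_succ (N - (n+1))]
      rw [hNn]
      simp only [Nat.sub_zero, Nat.choose_zero_right, Nat.cast_one, Nat.cast_zero,
        Nat.cast_mul, Nat.cast_add, pow_succ, one_mul]
      set S : ℝ := ((N - (n+1) : ℕ) : ℝ) with hS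
      set FS : ℝ := (((N - (n+1)).factorial : ℕ) : ℝ) with hFS
      field_simp
      ring
    · rw [if_neg (by omega)]
      simp only [Nat.add_sub_cancel]
      have e6 : N - j = (N - (j+1)) + 1 := by omega
      have e7 : n + 1 - j = (n - j) + 1 := by omega
      have e8 : n + 1 - (j+1) = n - j := by omega
      rw [e6, e7, e8]
      rw [cast_fac_div _ _ hsm, cast_fac_div _ _ (by omega), cast_fac_div _ _ (by omega)]
      rw [Nat.factorial_succ (N - (j+1)), Nat.factorial_succ (N - (n+1))]
      rw [Nat.choose_succ_succ (n+1) j]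
      have hNk : (N:ℝ) + 1 - ((j+1 : ℕ) : ℝ) = ((N - (j+1) : ℕ) : ℝ) + 1 := by
        rw [hmℝ]; push_cast; ring
      rw [hNn, hNk]
      simp only [Nat.cast_mul, Nat.cast_add, Nat.cast_one, pow_succ]
      set S : ℝ := ((N - (n+1) : ℕ) : ℝ) with hS
      set FS : ℝ := (((N - (n+1)).factorial : ℕ) : ℝ) with hFS
      set M : ℝ := ((N - (j+1) : ℕ) : ℝ) with hM
      set FM : ℝ := (((N - (j+1)).factorial : ℕ) : ℝ) with hFM
      field_simp
      ring
  · have hke : k = n + 2 := by omega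
    subst hke
    unfold aK
    rw [if_neg (by omega)]
    have c1 : (n+1).choose (n+2) = 0 := Nat.choose_eq_zero_of_lt (by omega)
    have c2 : (n+2) - 1 = n + 1 := rfl
    rw [c1, c2]
    simp only [Nat.cast_zero, zero_mul, Nat.choose_self, Nat.cast_one, one_mul,
      Nat.sub_self, pow_zero, mul_zero, zero_sub]
    have d2 : N + 1 - (n+2) = N - (n+1) := by omega
    rw [d2, Nat.div_self (Nat.factorial_pos _)]

/-- the Christoffel-transform relation for monic Krawtchouk polynomials:
`(N+1−x)·K_{n+1}(x;p,N) = (N−n)(1−p)·K_{n+1}(x;p,N+1) − K_{n+2}(x;p,N+1)`. -/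
theorem stmt_6 (p : ℝ) (hp0 : 0 < p) (hp1 : p < 1) (n N : ℕ) (hnN : n + 1 ≤ N) :
    (Polynomial.C ((N : ℝ) + 1) - Polynomial.X) * krawtchouk p (n + 1) N
      = Polynomial.C (((N : ℝ) - (n : ℝ)) * (1 - p)) * krawtchouk p (n + 1) (N + 1) -
        krawtchouk p (n + 2) (N + 1) := by
  have hL : (Polynomial.C ((N : ℝ) + 1) - Polynomial.X) * krawtchouk p (n + 1) N
      = ∑ k ∈ Finset.range (n + 3),
          C (aK p (n+1) N k * ((N:ℝ) + 1 - k) - (if k = 0 then 0 else aK p (n+1) N (k-1))) * FF k := by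
    rw [krawtchouk_eq, Finset.mul_sum]
    have step : ∀ k ∈ Finset.range (n + 2),
        (C ((N:ℝ)+1) - X) * (C (aK p (n+1) N k) * FF k)
          = C (aK p (n+1) N k * (((N:ℝ)+1) - k)) * FF k - C (aK p (n+1) N k) * FF (k+1) := by
      intro k _
      simp only [map_mul]
      linear_combination C (aK p (n+1) N k) * key_mul ((N:ℝ)+1) k
    rw [Finset.sum_congr rfl step, Finset.sum_sub_distrib]
    have h1 : ∑ k ∈ Finset.range (n + 2), C (aK p (n+1) N k * (((N:ℝ)+1) - k)) * FF k
        = ∑ k ∈ Finset.range (n + 3), C (aK p (n+1) N k * (((N:ℝ)+1) - k)) * FF k := by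
      rw [eq_comm, Finset.sum_range_succ]
      have : aK p (n+1) N (n+2) = 0 := by
        simp [aK, Nat.choose_eq_zero_of_lt]
      simp [this]
    have h2 : ∑ k ∈ Finset.range (n + 2), C (aK p (n+1) N k) * FF (k+1)
        = ∑ k ∈ Finset.range (n + 3),
            C (if k = 0 then 0 else aK p (n+1) N (k-1)) * FF k := by
      rw [Finset.sum_range_succ' (fun k => C (if k = 0 then 0 else aK p (n+1) N (k-1)) * FF k) (n+2)]
      simp
    rw [h1, h2, ← Finset.sum_sub_distrib]
    refine Finset.sum_congr rfl fun k _ => ?_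
    rw [map_sub]
    ring
  have hR : C (((N : ℝ) - (n : ℝ)) * (1 - p)) * krawtchouk p (n + 1) (N + 1) -
        krawtchouk p (n + 2) (N + 1)
      = ∑ k ∈ Finset.range (n + 3),
          C (((N:ℝ) - n) * (1 - p) * aK p (n+1) (N+1) k - aK p (n+2) (N+1) k) * FF k := by
    rw [krawtchouk_eq, krawtchouk_eq, Finset.mul_sum]
    have h1 : ∑ k ∈ Finset.range (n + 2),
          C (((N:ℝ) - n) * (1 - p)) * (C (aK p (n+1) (N+1) k) * FF k)
        = ∑ k ∈ Finset.range (n + 3),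
            C (((N:ℝ) - n) * (1 - p) * aK p (n+1) (N+1) k) * FF k := by
      rw [eq_comm, Finset.sum_range_succ]
      have h0 : aK p (n+1) (N+1) (n+2) = 0 := by
        simp [aK, Nat.choose_eq_zero_of_lt]
      simp only [h0, mul_zero, map_zero, zero_mul, add_zero]
      exact Finset.sum_congr rfl fun k _ => by rw [map_mul]; ring
    rw [h1, ← Finset.sum_sub_distrib]
    refine Finset.sum_congr rfl fun k _ => ?_
    rw [map_sub]
    ring
  rw [hL, hR]
  refine Finset.sum_congr rfl fun k hk => ?_
  rw [coeff_id p n N k hnN (Finset.mem_range.mp hk)]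
end

section
/- Let t > 0, 0 < w < 1, and n ≥ 0 an integer. Then the monic Meixner polynomials satisfy the polynomial identity in x: (w(n+1)(n+t)/(w−1)^2)·M_n(x; t, w) = −(x+t)·M_{n+1}(x; t+1, w) + (x + t + w(n+1)/(w−1))·M_{n+1}(x; t, w). -/
open Polynomial

/-- The monic Meixner polynomial
`M_n(x; t, w) = Σ_{k=0}^{n} C(n,k) (t+k)_{n−k} (w/(w−1))^{n−k} ∏_{j=0}^{k−1}(x−j)`. -/
noncomputable def meixner (t w : ℝ) (n : ℕ) : Polynomial ℝ :=
  ∑ k ∈ Finset.range (n + 1),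
    Polynomial.C ((n.choose k : ℝ) * (ascPochhammer ℝ (n - k)).eval (t + (k : ℝ)) *
        (w / (w - 1)) ^ (n - k)) *
      ∏ j ∈ Finset.range k, (Polynomial.X - Polynomial.C (j : ℝ))

noncomputable def pr (m : ℕ) (x : ℝ) : ℝ := (ascPochhammer ℝ m).eval x

lemma pr_succ_right (m : ℕ) (x : ℝ) : pr (m+1) x = pr m x * (x + m) := by
  simp [pr, ascPochhammer_succ_right]

lemma pr_succ_left (m : ℕ) (x : ℝ) : pr (m+1) x = x * pr m (x+1) := by
  simp [pr, ascPochhammer_succ_left, eval_comp]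

lemma chooseA (n k : ℕ) : (n+1) * n.choose k = (n+1).choose k * (n+1-k) :=
  (Nat.add_one_mul_choose_eq n k).trans (Nat.choose_succ_right_eq (n+1) k)

noncomputable def cf (c t : ℝ) (n k : ℕ) : ℝ :=
  (n.choose k : ℝ) * pr (n - k) (t + k) * c ^ (n - k)

lemma key (c t : ℝ) (n k : ℕ) (hk : k ≤ n + 2) :
    c * (c-1) * ((n:ℝ)+1) * ((n:ℝ)+t) * cf c t n k =
      -( (if k = 0 then 0 else cf c (t+1) (n+1) (k-1)) + cf c (t+1) (n+1) k * ((k:ℝ)+t) )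
      + ( (if k = 0 then 0 else cf c t (n+1) (k-1)) + cf c t (n+1) k * ((k:ℝ)+t)
          + c * ((n:ℝ)+1) * cf c t (n+1) k ) := by
  rcases k with _ | j
  · -- k = 0
    simp only [reduceIte, Nat.cast_zero, Nat.choose_zero_right, cf, Nat.sub_zero, add_zero,
      Nat.cast_one]
    have h1 : pr n t * (t + n) = t * pr n (t+1) := by
      rw [← pr_succ_right, pr_succ_left]
    have h2 : pr (n+1) t = t * pr n (t+1) := pr_succ_left n t
    have h3 : pr (n+1) (t+1) = pr n (t+1) * ((t+1) + n) := pr_succ_right n (t+1)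
    rw [h2, h3]
    linear_combination (c*(c-1)*((n:ℝ)+1)*c^n) * h1
  · -- k = j+1
    simp only [if_neg (Nat.succ_ne_zero j), Nat.add_sub_cancel]
    rcases le_or_gt (j+1) n with h | h
    · obtain ⟨m, hm⟩ : ∃ m, n = (j+1) + m := ⟨n - (j+1), by omega⟩
      subst hm
      have e1 : (j+1)+m - (j+1) = m := by omega
      have e2 : (j+1)+m+1 - (j+1) = m+1 := by omega
      have e3 : (j+1)+m+1 - j = m+2 := by omega
      simp only [cf, e1, e2, e3]
      push_cast
      have a1 : t + ((j:ℝ) + 1) = t + (j:ℝ) + 1 := by ring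
      have a2 : t + 1 + ((j:ℝ) + 1) = t + (j:ℝ) + 1 + 1 := by ring
      have a3 : t + 1 + (j:ℝ) = t + (j:ℝ) + 1 := by ring
      rw [a1, a2, a3]
      have h1' : pr (m+2) (t + (j:ℝ) + 1) = pr (m+1) (t + (j:ℝ) + 1) * (t + (j:ℝ) + 1 + ((m:ℝ)+1)) := by
        have := pr_succ_right (m+1) (t + (j:ℝ) + 1); push_cast at this; exact this
      have h3' : pr (m+2) (t + (j:ℝ)) = (t + (j:ℝ)) * pr (m+1) (t + (j:ℝ) + 1) := pr_succ_left (m+1) _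
      have h2' : pr (m+1) (t + (j:ℝ) + 1 + 1) = pr m (t + (j:ℝ) + 1 + 1) * (t + (j:ℝ) + 1 + 1 + (m:ℝ)) := pr_succ_right m _
      have h4 : pr (m+1) (t + (j:ℝ) + 1) = (t + (j:ℝ) + 1) * pr m (t + (j:ℝ) + 1 + 1) := pr_succ_left m _
      rw [h1', h3', h2', h4]
      have hq : pr m (t + (j:ℝ) + 1) * (t + (j:ℝ) + 1 + (m:ℝ)) = (t + (j:ℝ) + 1) * pr m (t + (j:ℝ) + 1 + 1) := by
        rw [← pr_succ_right, pr_succ_left]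
      have hC1 : (((j+1+m+1).choose (j+1) : ℕ) : ℝ) * ((m:ℝ)+1) = ((j:ℝ)+1+(m:ℝ)+1) * (((j+1+m).choose (j+1) : ℕ) : ℝ) := by
        have hn := chooseA (j+1+m) (j+1); rw [e2] at hn; exact_mod_cast by push_cast [hn]; ring
      have hC2 : (((j+1+m+1).choose (j+1) : ℕ) : ℝ) * ((j:ℝ)+1) = (((j+1+m+1).choose j : ℕ) : ℝ) * ((m:ℝ)+2) := by
        have hn := Nat.choose_succ_right_eq (j+1+m+1) j; rw [e3] at hn
        exact_mod_cast by push_cast [hn]; ring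
      set p := pr m (t + (j:ℝ) + 1 + 1) with hp
      linear_combination (c*(c-1)*((j:ℝ)+1+(m:ℝ)+1)*(((j+1+m).choose (j+1) : ℕ) : ℝ)*c^m) * hq + ((1-c)*p*c^(m+1)*(t+(j:ℝ)+1)) * hC1 + (-c*p*c^(m+1)*(t+(j:ℝ)+1)) * hC2

    · have hpr0 : ∀ x : ℝ, pr 0 x = 1 := fun x => by simp [pr]
      have hpr1 : ∀ x : ℝ, pr 1 x = x := fun x => by simp [pr, ascPochhammer_one]
      have hj : j = n ∨ j = n + 1 := by omega
      rcases hj with rfl | rfl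
      · have e1 : j - (j+1) = 0 := by omega
        have e2 : j+1 - (j+1) = 0 := by omega
        have e3 : j+1 - j = 1 := by omega
        simp only [cf, e1, e2, e3, Nat.choose_self, Nat.choose_succ_self_right,
          Nat.choose_eq_zero_of_lt (show j < j+1 by omega), hpr0, hpr1]
        push_cast
        ring
      · have e1 : n - (n+2) = 0 := by omega
        have e2 : n+1 - (n+2) = 0 := by omega
        have e3 : n+1 - (n+1) = 0 := by omega
        simp only [cf, e1, e2, e3, Nat.choose_self,
          Nat.choose_eq_zero_of_lt (show n < n+2 by omega),
          Nat.choose_eq_zero_of_lt (show n+1 < n+2 by omega), hpr0]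
        push_cast
        ring

noncomputable def pk (k : ℕ) : Polynomial ℝ :=
  ∏ j ∈ Finset.range k, (Polynomial.X - Polynomial.C (j : ℝ))

lemma meixner_pad (t w : ℝ) (n N : ℕ) (h : n + 1 ≤ N) :
    meixner t w n = ∑ k ∈ Finset.range N, C (cf (w/(w-1)) t n k) * pk k := by
  have : meixner t w n = ∑ k ∈ Finset.range (n+1), C (cf (w/(w-1)) t n k) * pk k := by
    simp only [meixner, cf, pr, pk]
  rw [this]
  apply Finset.sum_subset (Finset.range_subset_range.2 h)
  intro k hk hk'
  have : n < k := by simp only [Finset.mem_range] at hk hk' ⊢; omega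
  simp [cf, Nat.choose_eq_zero_of_lt this]

lemma mul_shift (t : ℝ) (b : ℕ → ℝ) (N : ℕ) (h0 : b N = 0) :
    (X + C t) * ∑ k ∈ Finset.range (N+1), C (b k) * pk k
      = ∑ k ∈ Finset.range (N+1),
          C ((if k = 0 then 0 else b (k-1)) + b k * ((k:ℝ)+t)) * pk k := by
  rw [Finset.mul_sum]
  have step : ∀ k, (X + C t) * (C (b k) * pk k)
      = C (b k) * pk (k+1) + C (b k * ((k:ℝ)+t)) * pk k := by
    intro k
    have hpk : pk (k+1) = pk k * (X - C (k:ℝ)) := Finset.prod_range_succ _ _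
    rw [hpk, map_mul, map_add]
    ring
  calc ∑ k ∈ Finset.range (N+1), (X + C t) * (C (b k) * pk k)
      = ∑ k ∈ Finset.range (N+1),
          (C (b k) * pk (k+1) + C (b k * ((k:ℝ)+t)) * pk k) :=
        Finset.sum_congr rfl (fun k _ => step k)
    _ = (∑ k ∈ Finset.range (N+1), C (b k) * pk (k+1))
        + ∑ k ∈ Finset.range (N+1), C (b k * ((k:ℝ)+t)) * pk k := Finset.sum_add_distrib
    _ = (∑ k ∈ Finset.range (N+1), C (if k = 0 then 0 else b (k-1)) * pk k)
        + ∑ k ∈ Finset.range (N+1), C (b k * ((k:ℝ)+t)) * pk k := by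
        congr 1
        rw [Finset.sum_range_succ, h0, Finset.sum_range_succ']
        simp
    _ = _ := by
        rw [← Finset.sum_add_distrib]
        exact Finset.sum_congr rfl (fun k _ => by rw [map_add, add_mul])

/-- the mixed recurrence relation for monic Meixner polynomials:
`(w(n+1)(n+t)/(w−1)²)·M_n(x;t,w) = −(x+t)·M_{n+1}(x;t+1,w) + (x+t+w(n+1)/(w−1))·M_{n+1}(x;t,w)`. -/
theorem stmt_8 (t w : ℝ) (ht : 0 < t) (hw0 : 0 < w) (hw1 : w < 1) (n : ℕ) :
    Polynomial.C (w * ((n : ℝ) + 1) * ((n : ℝ) + t) / (w - 1) ^ 2) * meixner t w n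
      = -((Polynomial.X + Polynomial.C t) * meixner (t + 1) w (n + 1)) +
        (Polynomial.X + Polynomial.C (t + w * ((n : ℝ) + 1) / (w - 1))) *
          meixner t w (n + 1) := by
  have hw : w - 1 ≠ 0 := sub_ne_zero.2 (ne_of_lt hw1)
  set c := w / (w - 1) with hc
  have hL : w * ((n:ℝ)+1) * ((n:ℝ)+t) / (w-1)^2 = c * (c-1) * ((n:ℝ)+1) * ((n:ℝ)+t) := by
    rw [hc]; field_simp; ring
  have hS : t + w * ((n:ℝ)+1) / (w-1) = t + c * ((n:ℝ)+1) := by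
    rw [hc]; ring
  rw [hL, hS, meixner_pad t w n (n+2+1) (by omega),
      meixner_pad t w (n+1) (n+2+1) (by omega), meixner_pad (t+1) w (n+1) (n+2+1) (by omega),
      ← hc]
  have h0 : cf c t (n+1) (n+2) = 0 := by simp [cf, Nat.choose_eq_zero_of_lt (by omega : n+1 < n+2)]
  have h0' : cf c (t+1) (n+1) (n+2) = 0 := by simp [cf, Nat.choose_eq_zero_of_lt (by omega : n+1 < n+2)]
  have hsplit : (X + C (t + c * ((n:ℝ)+1))) = (X + C t) + C (c * ((n:ℝ)+1)) := by
    rw [map_add]; ring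
  rw [mul_shift t (cf c (t+1) (n+1)) (n+2) h0', hsplit, add_mul,
      mul_shift t (cf c t (n+1)) (n+2) h0]
  rw [Finset.mul_sum, Finset.mul_sum, ← Finset.sum_neg_distrib, ← Finset.sum_add_distrib,
      ← Finset.sum_add_distrib]
  apply Finset.sum_congr rfl
  intro k hk
  have hkle : k ≤ n + 2 := by simp only [Finset.mem_range] at hk; omega
  have hcomb : -(C ((if k = 0 then 0 else cf c (t+1) (n+1) (k-1)) + cf c (t+1) (n+1) k * ((k:ℝ)+t)) * pk k)
      + (C ((if k = 0 then 0 else cf c t (n+1) (k-1)) + cf c t (n+1) k * ((k:ℝ)+t)) * pk k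
        + C (c * ((n:ℝ)+1)) * (C (cf c t (n+1) k) * pk k))
      = C (-((if k = 0 then 0 else cf c (t+1) (n+1) (k-1)) + cf c (t+1) (n+1) k * ((k:ℝ)+t))
          + ((if k = 0 then 0 else cf c t (n+1) (k-1)) + cf c t (n+1) k * ((k:ℝ)+t)
            + c * ((n:ℝ)+1) * cf c t (n+1) k)) * pk k := by
    simp only [map_add, map_neg, map_mul]
    ring
  rw [hcomb, ← key c t n k hkle]
  simp only [map_mul]
  ring
end

section
/- For every integer n ≥ 2, define T_n(x) = Σ_{j=0}^{n−1} ((3n−2j)/(n+2)) c_{n,j+1} x^j, where c_{n,k} are the Narayana numbers. Then 𝒩_n(1) ≠ 0, 𝒩_{n+1}(1)/𝒩_n(1) = 2(2n+1)/(n+2), and (x−1)·T_n(x) = 𝒩_{n+1}(x) − (2(2n+1)/(n+2))·𝒩_n(x) as polynomials; that is, T_n is the unique polynomial 𝒩̃_n satisfying (x−1)𝒩̃_n(x) = 𝒩_{n+1}(x) − (𝒩_{n+1}(1)/𝒩_n(1))𝒩_n(x), and its coefficients are given by [x^j]𝒩̃_n = ((3n−2j)/(n+2)) c_{n,j+1}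 for 0 ≤ j ≤ n−1. -/
open Polynomial

noncomputable def narayanaNum (n k : ℕ) : ℝ :=
  (n.choose k : ℝ) * (n.choose (k - 1) : ℝ) / (n : ℝ)

noncomputable def redNarayana (n : ℕ) : Polynomial ℝ :=
  ∑ j ∈ Finset.range n, Polynomial.C (narayanaNum n (j + 1)) * Polynomial.X ^ j

noncomputable def redNarayanaCT (n : ℕ) : Polynomial ℝ :=
  ∑ j ∈ Finset.range n,
    Polynomial.C ((3 * (n : ℝ) - 2 * (j : ℝ)) / ((n : ℝ) + 2) * narayanaNum n (j + 1)) *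
      Polynomial.X ^ j

/-!
Compare coefficients. Because `C(n, k) = 0` for `k > n`, the coefficient formulas of `𝒩_n` and
`𝒩̃_n` hold for every index, so the coefficient of `x^(j+1)` in `(x − 1)𝒩̃_n` is the same
rational expression in `C(n, j), C(n, j+1), C(n, j+2)` for all `j`. After clearing denominators
the required identity is a polynomial combination of the two relations
`C(n, k+1)(k+1) = C(n, k)(n − k)` for `k = j, j+1`, which hold over `ℝ` for all `k`.
Evaluating the identity at `1` gives the ratio, and cancelling the nonzero factor `x − 1` gives
uniqueness.
-/

lemma Nat.cast_choose_succ_mul {R : Type*} [CommRing R] (n k : ℕ) :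
    (n.choose (k + 1) : R) * (k + 1) = n.choose k * (n - k) := by
  rcases le_or_gt k n with hkn | hnk
  · have := congrArg (Nat.cast : ℕ → R) (Nat.choose_succ_right_eq n k)
    push_cast [Nat.cast_sub hkn] at this
    exact this
  · simp [Nat.choose_eq_zero_of_lt hnk, Nat.choose_eq_zero_of_lt (hnk.trans (Nat.lt_succ_self k))]

lemma narayanaNum_nonneg (n k : ℕ) : 0 ≤ narayanaNum n k := by
  unfold narayanaNum; positivity

lemma narayanaNum_eq_zero_of_lt {n k : ℕ} (h : n < k) : narayanaNum n k = 0 := by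
  simp [narayanaNum, Nat.choose_eq_zero_of_lt h]

lemma narayanaNum_one {n : ℕ} (hn : n ≠ 0) : narayanaNum n 1 = 1 := by
  simp [narayanaNum, hn]

lemma coeff_redNarayana (n j : ℕ) : (redNarayana n).coeff j = narayanaNum n (j + 1) := by
  simp only [redNarayana, finsetSum_coeff, coeff_C_mul_X_pow, Finset.sum_ite_eq,
    Finset.mem_range]
  split_ifs with h
  · rfl
  · exact (narayanaNum_eq_zero_of_lt (by omega)).symm

lemma coeff_redNarayanaCT (n j : ℕ) :
    (redNarayanaCT n).coeff j = (3 * (n : ℝ) - 2 * j) / (n + 2) * narayanaNum n (j + 1) := by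
  simp only [redNarayanaCT, finsetSum_coeff, coeff_C_mul_X_pow, Finset.sum_ite_eq,
    Finset.mem_range]
  split_ifs with h
  · rfl
  · rw [narayanaNum_eq_zero_of_lt (by omega), mul_zero]

lemma narayanaNum_recurrence {n : ℕ} (hn : n ≠ 0) (j : ℕ) :
    (3 * (n : ℝ) - 2 * j) / (n + 2) * narayanaNum n (j + 1)
      - (3 * (n : ℝ) - 2 * (j + 1 : ℕ)) / (n + 2) * narayanaNum n (j + 2)
    = narayanaNum (n + 1) (j + 2) - 2 * (2 * (n : ℝ) + 1) / (n + 2) * narayanaNum n (j + 2) := by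
  have h₁ := Nat.cast_choose_succ_mul (R := ℝ) n j
  have h₂ : (n.choose (j + 2) : ℝ) * (j + 2) = n.choose (j + 1) * (n - (j + 1)) := by
    have := Nat.cast_choose_succ_mul (R := ℝ) n (j + 1)
    push_cast at this ⊢
    linear_combination this
  have hn' : (n : ℝ) ≠ 0 := by exact_mod_cast hn
  simp only [narayanaNum, show j + 2 - 1 = j + 1 from rfl, Nat.add_sub_cancel,
    Nat.choose_succ_succ', Nat.cast_add, Nat.cast_one] at *
  field_simp
  linear_combination (-(n + 2) * (n.choose (j + 1) : ℝ) + n * n.choose (j + 2)) * h₁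
    + (-(n : ℝ) * n.choose j + (n + 2) * n.choose (j + 1)) * h₂

lemma X_sub_one_mul_redNarayanaCT {n : ℕ} (hn : n ≠ 0) :
    (X - C 1) * redNarayanaCT n
      = redNarayana (n + 1) - C (2 * (2 * (n : ℝ) + 1) / (n + 2)) * redNarayana n := by
  have hn' : (n : ℝ) ≠ 0 := by exact_mod_cast hn
  ext (_ | j)
  · simp only [mul_coeff_zero, coeff_sub, coeff_X_zero, coeff_C_zero,
      coeff_redNarayana, coeff_redNarayanaCT, narayanaNum_one hn, narayanaNum_one n.succ_ne_zero]
    field_simp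
    ring
  · rw [coeff_X_sub_C_mul, coeff_sub, coeff_C_mul, coeff_redNarayanaCT, coeff_redNarayanaCT,
      coeff_redNarayana, coeff_redNarayana, one_mul]
    exact narayanaNum_recurrence hn j

lemma redNarayana_eval_one_pos {n : ℕ} (hn : n ≠ 0) : 0 < (redNarayana n).eval 1 := by
  have hsum : (redNarayana n).eval 1 = ∑ j ∈ Finset.range n, narayanaNum n (j + 1) := by
    simp only [redNarayana, eval_finsetSum, eval_mul, eval_C, eval_pow, eval_X, one_pow, mul_one]
  rw [hsum]
  exact Finset.sum_pos' (fun j _ => narayanaNum_nonneg n (j + 1))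
    ⟨0, Finset.mem_range.2 (Nat.pos_of_ne_zero hn), by rw [narayanaNum_one hn]; exact one_pos⟩

lemma eval_div_eval_eq_of_X_sub_C_mul_eq {R : Type*} [Field R] {a r : R} {P Q T : R[X]}
    (h : (X - C a) * T = P - C r * Q) (hQ : Q.eval a ≠ 0) : P.eval a / Q.eval a = r := by
  have := congrArg (eval a) h
  simp only [eval_mul, eval_sub, eval_X, eval_C, sub_self, zero_mul] at this
  rw [div_eq_iff hQ]
  linear_combination -this

/-- `𝒩_n(1) ≠ 0`, `𝒩_{n+1}(1)/𝒩_n(1) = 2(2n+1)/(n+2)`, the polynomial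
`T_n = 𝒩̃_n` satisfies `(x−1)T_n(x) = 𝒩_{n+1}(x) − (2(2n+1)/(n+2))𝒩_n(x)`, it is the unique
such polynomial, and its coefficients are `[x^j]𝒩̃_n = ((3n−2j)/(n+2)) c_{n,j+1}`. -/
theorem stmt_12 (n : ℕ) (hn : 2 ≤ n) :
    (redNarayana n).eval 1 ≠ 0 ∧
    (redNarayana (n + 1)).eval 1 / (redNarayana n).eval 1
      = 2 * (2 * (n : ℝ) + 1) / ((n : ℝ) + 2) ∧
    (Polynomial.X - Polynomial.C 1) * redNarayanaCT n
      = redNarayana (n + 1) -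
        Polynomial.C (2 * (2 * (n : ℝ) + 1) / ((n : ℝ) + 2)) * redNarayana n ∧
    (∀ S : Polynomial ℝ,
      (Polynomial.X - Polynomial.C 1) * S
        = redNarayana (n + 1) -
          Polynomial.C ((redNarayana (n + 1)).eval 1 / (redNarayana n).eval 1) * redNarayana n →
      S = redNarayanaCT n) ∧
    (∀ j < n, (redNarayanaCT n).coeff j
      = (3 * (n : ℝ) - 2 * (j : ℝ)) / ((n : ℝ) + 2) * narayanaNum n (j + 1)) := by
  have hn0 : n ≠ 0 := by omega
  have hne := (redNarayana_eval_one_pos hn0).ne'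
  have hid := X_sub_one_mul_redNarayanaCT hn0
  have hratio := eval_div_eval_eq_of_X_sub_C_mul_eq hid hne
  refine ⟨hne, hratio, hid, fun S hS => ?_, fun j _ => coeff_redNarayanaCT n j⟩
  rw [hratio] at hS
  exact mul_left_cancel₀ (X_sub_C_ne_zero 1) (hS.trans hid.symm)
end
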